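/- arXiv:2508.11843 — 4 statements merged into one kernel-verified Lean document; each statement's English description precedes it below -/
import Mathlib

section
/- Let M ∈ ℝ, τ² > 0, ε ∈ (0,1). Suppose A ~ N(M, τ²), and conditional on A, A_tr ~ N(εA, ε(1-ε)τ²), and define A_te := A - A_tr. Then marginally A_tr ~ N(εM, ετ²), A_te ~ N((1-ε)M, (1-ε)τ²), and A_tr is independent of A_te. -/
open MeasureTheory ProbabilityTheory Real

namespace GaussianThinningAux

open scoped ENNReal NNReal

/-- map of a `withDensity` measure under a measurable equivalence. -/
lemma map_withDensity_equiv {α β : Type*} [MeasurableSpace α] [MeasurableSpace β]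
    (e : α ≃ᵐ β) (ν : Measure α) {g : α → ℝ≥0∞} (hg : Measurable g) :
    (ν.withDensity g).map e = (ν.map e).withDensity (g ∘ e.symm) := by
  ext s hs
  rw [Measure.map_apply e.measurable hs, withDensity_apply _ (e.measurable hs),
    withDensity_apply _ hs, MeasureTheory.setLIntegral_map hs (hg.comp e.symm.measurable)
      e.measurable]
  refine setLIntegral_congr_fun (e.measurable hs) (fun x _ => ?_)
  simp

lemma gaussian_prod_withDensity (m₁ m₂ : ℝ) {v₁ v₂ : ℝ≥0} (h₁ : v₁ ≠ 0) (h₂ : v₂ ≠ 0) :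
    (gaussianReal m₁ v₁).prod (gaussianReal m₂ v₂) =
      (volume.prod volume).withDensity
        (fun p => gaussianPDF m₁ v₁ p.1 * gaussianPDF m₂ v₂ p.2) := by
  refine Measure.prod_eq fun s t hs ht => ?_
  rw [withDensity_apply _ (hs.prod ht), ← Measure.prod_restrict,
    lintegral_prod_mul ((measurable_gaussianPDF m₁ v₁).aemeasurable)
      ((measurable_gaussianPDF m₂ v₂).aemeasurable),
    gaussianReal_apply m₁ h₁ s, gaussianReal_apply m₂ h₂ t]

lemma gaussianPDFReal_toNNReal (m : ℝ) {v : ℝ} (hv : 0 ≤ v) (x : ℝ) :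
    gaussianPDFReal m v.toNNReal x = (√(2 * π * v))⁻¹ * rexp (-(x - m) ^ 2 / (2 * v)) := by
  rw [gaussianPDFReal, Real.coe_toNNReal _ hv]

lemma pdf_identity {M τsq ε : ℝ} (hτ : 0 < τsq) (hε0 : 0 < ε) (hε1 : ε < 1) (x z : ℝ) :
    gaussianPDFReal (ε * M) (ε * τsq).toNNReal (ε * x + z) *
      gaussianPDFReal ((1 - ε) * M) ((1 - ε) * τsq).toNNReal ((1 - ε) * x - z) =
    gaussianPDFReal M τsq.toNNReal x *
      gaussianPDFReal 0 (ε * (1 - ε) * τsq).toNNReal z := by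
  have h1 : (0:ℝ) < 1 - ε := by linarith
  have hτ' : τsq ≠ 0 := hτ.ne'
  have hε0' : ε ≠ 0 := hε0.ne'
  have h1' : (1:ℝ) - ε ≠ 0 := h1.ne'
  have hπ : (0:ℝ) < π := Real.pi_pos
  rw [gaussianPDFReal_toNNReal _ (by positivity), gaussianPDFReal_toNNReal _ (by positivity),
    gaussianPDFReal_toNNReal _ (by positivity), gaussianPDFReal_toNNReal _ (by positivity)]
  rw [mul_mul_mul_comm, ← mul_inv, ← Real.sqrt_mul (by positivity), ← Real.exp_add,
    mul_mul_mul_comm ((√(2 * π * τsq))⁻¹), ← mul_inv, ← Real.sqrt_mul (by positivity),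
    ← Real.exp_add]
  congr 2
  · ring
  · field_simp
    ring

/-- The linear measurable equivalence `(u, v) ↦ (u + v, (1-ε)u - εv)`. -/
noncomputable def thinEquiv (ε : ℝ) : (ℝ × ℝ) ≃ᵐ (ℝ × ℝ) where
  toFun p := (p.1 + p.2, (1 - ε) * p.1 - ε * p.2)
  invFun p := (ε * p.1 + p.2, (1 - ε) * p.1 - p.2)
  left_inv p := by
    obtain ⟨u, v⟩ := p
    simp only [Prod.mk.injEq]
    constructor <;> ring
  right_inv p := by
    obtain ⟨x, z⟩ := p
    simp only [Prod.mk.injEq]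
    constructor <;> ring
  measurable_toFun := by
    simp only [Equiv.coe_fn_mk]
    exact (measurable_fst.add measurable_snd).prodMk
      ((measurable_fst.const_mul _).sub (measurable_snd.const_mul _))
  measurable_invFun := by
    simp only [Equiv.coe_fn_symm_mk]
    exact ((measurable_fst.const_mul _).add measurable_snd).prodMk
      ((measurable_fst.const_mul _).sub measurable_snd)

lemma thinEquiv_apply (ε : ℝ) (p : ℝ × ℝ) :
    thinEquiv ε p = (p.1 + p.2, (1 - ε) * p.1 - ε * p.2) := rfl

lemma thinEquiv_symm_apply (ε : ℝ) (p : ℝ × ℝ) :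
    (thinEquiv ε).symm p = (ε * p.1 + p.2, (1 - ε) * p.1 - p.2) := rfl

lemma thinEquiv_measurePreserving (ε : ℝ) :
    MeasurePreserving (thinEquiv ε) (volume : Measure (ℝ × ℝ)) volume := by
  have h1 : MeasurePreserving (fun p : ℝ × ℝ => (p.1, p.1 + p.2))
      (volume.prod volume) (volume.prod volume) :=
    (MeasurePreserving.id volume).skew_product (g := fun u v => u + v)
      (measurable_fst.add measurable_snd)
      (ae_of_all _ fun u => (measurePreserving_add_left (volume : Measure ℝ) u).map_eq)
  have h3 : MeasurePreserving (fun p : ℝ × ℝ => (p.1, p.2 - ε * p.1))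
      (volume.prod volume) (volume.prod volume) :=
    (MeasurePreserving.id volume).skew_product (g := fun w u => u - ε * w)
      (measurable_snd.sub (measurable_fst.const_mul ε))
      (ae_of_all _ fun w => by
        have := (measurePreserving_add_right (volume : Measure ℝ) (-(ε * w))).map_eq
        simpa [sub_eq_add_neg] using this)
  have h2 : MeasurePreserving (Prod.swap : ℝ × ℝ → ℝ × ℝ)
      (volume.prod volume) (volume.prod volume) := Measure.measurePreserving_swap
  have hcomp := (h3.comp h2).comp h1
  have hfun : ⇑(thinEquiv ε) =
      (fun p : ℝ × ℝ => (p.1, p.2 - ε * p.1)) ∘ Prod.swap ∘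
        (fun p : ℝ × ℝ => (p.1, p.1 + p.2)) := by
    funext p
    obtain ⟨u, v⟩ := p
    simp only [Function.comp_apply, Prod.swap_prod_mk, thinEquiv_apply, Prod.mk.injEq]
    refine ⟨trivial, ?_⟩; ring
  rw [Measure.volume_eq_prod, hfun]
  exact hcomp

lemma map_thinEquiv {M τsq ε : ℝ} (hτ : 0 < τsq) (hε0 : 0 < ε) (hε1 : ε < 1) :
    ((gaussianReal (ε * M) (ε * τsq).toNNReal).prod
        (gaussianReal ((1 - ε) * M) ((1 - ε) * τsq).toNNReal)).map (thinEquiv ε) =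
      (gaussianReal M τsq.toNNReal).prod
        (gaussianReal 0 (ε * (1 - ε) * τsq).toNNReal) := by
  have h1 : (0:ℝ) < 1 - ε := by linarith
  have hv1 : (ε * τsq).toNNReal ≠ 0 := by
    simp [Real.toNNReal_eq_zero, not_le]; positivity
  have hv2 : ((1 - ε) * τsq).toNNReal ≠ 0 := by
    simp [Real.toNNReal_eq_zero, not_le]; positivity
  have hvτ : τsq.toNNReal ≠ 0 := by
    simp [Real.toNNReal_eq_zero, not_le]; positivity
  have hv0 : (ε * (1 - ε) * τsq).toNNReal ≠ 0 := by
    simp [Real.toNNReal_eq_zero, not_le]; positivity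
  rw [gaussian_prod_withDensity _ _ hv1 hv2, gaussian_prod_withDensity _ _ hvτ hv0]
  have hd : Measurable fun p : ℝ × ℝ =>
      gaussianPDF (ε * M) (ε * τsq).toNNReal p.1 *
        gaussianPDF ((1 - ε) * M) ((1 - ε) * τsq).toNNReal p.2 :=
    ((measurable_gaussianPDF _ _).comp measurable_fst).mul
      ((measurable_gaussianPDF _ _).comp measurable_snd)
  rw [map_withDensity_equiv (thinEquiv ε) _ hd, ← Measure.volume_eq_prod,
    (thinEquiv_measurePreserving ε).map_eq, Measure.volume_eq_prod]
  congr 1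
  funext p
  obtain ⟨x, z⟩ := p
  simp only [Function.comp_apply, thinEquiv_symm_apply]
  rw [gaussianPDF, gaussianPDF, gaussianPDF, gaussianPDF,
    ← ENNReal.ofReal_mul (gaussianPDFReal_nonneg _ _ _),
    ← ENNReal.ofReal_mul (gaussianPDFReal_nonneg _ _ _)]
  exact congrArg ENNReal.ofReal (pdf_identity hτ hε0 hε1 x z)

end GaussianThinningAux

open GaussianThinningAux

/-- Gaussian data thinning: if `A ~ N(M, τ²)` and, conditionally on `A`,
`A_tr ~ N(εA, ε(1-ε)τ²)`, then marginally `A_tr ~ N(εM, ετ²)`,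
`A_te := A - A_tr ~ N((1-ε)M, (1-ε)τ²)`, and `A_tr ⫫ A_te`. -/
theorem gaussian_thinning
    {Ω : Type*} [MeasurableSpace Ω] (μ : Measure Ω) [IsProbabilityMeasure μ]
    (M τsq ε : ℝ) (hτ : 0 < τsq) (hε : ε ∈ Set.Ioo (0 : ℝ) 1)
    (A Atr : Ω → ℝ) (hA : Measurable A) (hAtr : Measurable Atr)
    (hAlaw : μ.map A = gaussianReal M τsq.toNNReal)
    (hcond : ∀ᵐ x ∂(μ.map A),
      condDistrib Atr A μ x = gaussianReal (ε * x) ((ε * (1 - ε) * τsq).toNNReal)) :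
    μ.map Atr = gaussianReal (ε * M) ((ε * τsq).toNNReal) ∧
    μ.map (fun ω => A ω - Atr ω) =
      gaussianReal ((1 - ε) * M) (((1 - ε) * τsq).toNNReal) ∧
    IndepFun Atr (fun ω => A ω - Atr ω) μ := by
  obtain ⟨hε0, hε1⟩ := hε
  set v0 := (ε * (1 - ε) * τsq).toNNReal with hv0def
  set P1 := gaussianReal M τsq.toNNReal with hP1def
  set P2 := gaussianReal 0 v0 with hP2def
  set Q1 := gaussianReal (ε * M) (ε * τsq).toNNReal with hQ1def
  set Q2 := gaussianReal ((1 - ε) * M) ((1 - ε) * τsq).toNNReal with hQ2def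
  haveI hPA : IsProbabilityMeasure (μ.map A) := by rw [hAlaw]; infer_instance
  have hφ : Measurable fun p : ℝ × ℝ => (p.1, ε * p.1 + p.2) :=
    measurable_fst.prodMk ((measurable_fst.const_mul ε).add measurable_snd)
  -- Step 1: the joint law disintegrates through `condDistrib`.
  have hjoint : μ.map (fun ω => (A ω, Atr ω)) = (μ.map A) ⊗ₘ condDistrib Atr A μ := by
    rw [condDistrib, ← Measure.fst_map_prodMk hAtr (X := A) (μ := μ),
      Measure.disintegrate]
  -- Step 2: identify the joint law with a push-forward of a product of Gaussians.
  have hjoint2 : μ.map (fun ω => (A ω, Atr ω)) =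
      (P1.prod P2).map (fun p : ℝ × ℝ => (p.1, ε * p.1 + p.2)) := by
    rw [hjoint]
    haveI : IsProbabilityMeasure ((P1.prod P2).map fun p : ℝ × ℝ => (p.1, ε * p.1 + p.2)) :=
      Measure.isProbabilityMeasure_map hφ.aemeasurable
    refine ext_of_generate_finite _ generateFrom_prod.symm
      isPiSystem_prod ?_ ?_
    · rintro _ ⟨S, hS, T, hT, rfl⟩
      simp only [Set.mem_setOf_eq] at hS hT
      rw [Measure.compProd_apply_prod hS hT,
        Measure.map_apply hφ (hS.prod hT), Measure.prod_apply (hφ (hS.prod hT))]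
      have hsec : (fun x : ℝ => P2 (Prod.mk x ⁻¹'
            ((fun p : ℝ × ℝ => (p.1, ε * p.1 + p.2)) ⁻¹' S ×ˢ T))) =
          S.indicator (fun x => gaussianReal (ε * x) v0 T) := by
        funext x
        by_cases hx : x ∈ S
        · have : Prod.mk x ⁻¹' ((fun p : ℝ × ℝ => (p.1, ε * p.1 + p.2)) ⁻¹' S ×ˢ T)
              = (fun z => ε * x + z) ⁻¹' T := by
            ext z; simp [hx]
          rw [this, Set.indicator_of_mem hx,
            ← Measure.map_apply (measurable_const_add (ε * x)) hT]
          simp only [hP2def]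
          rw [gaussianReal_map_const_add (μ := 0) (v := v0) (ε * x), zero_add]
        · have : Prod.mk x ⁻¹' ((fun p : ℝ × ℝ => (p.1, ε * p.1 + p.2)) ⁻¹' S ×ˢ T)
              = ∅ := by
            ext z; simp [hx]
          rw [this, Set.indicator_of_notMem hx]
          simp
      rw [hsec, lintegral_indicator hS]
      have : ∫⁻ x in S, condDistrib Atr A μ x T ∂(μ.map A)
          = ∫⁻ x in S, gaussianReal (ε * x) v0 T ∂(μ.map A) := by
        refine lintegral_congr_ae ?_
        filter_upwards [ae_restrict_of_ae hcond] with x hx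
        rw [hx]
      rw [this, hAlaw]
    · rw [Measure.compProd_apply_univ]
      simp [measure_univ]
  -- Step 3: the law of the pair `(Atr, A - Atr)`.
  have hg : Measurable fun p : ℝ × ℝ => (p.2, p.1 - p.2) :=
    measurable_snd.prodMk (measurable_fst.sub measurable_snd)
  have hQmap : (P1.prod P2).map ⇑(thinEquiv ε).symm = Q1.prod Q2 := by
    rw [← map_thinEquiv hτ hε0 hε1 (M := M), MeasurableEquiv.map_symm_map]
  have hpair : μ.map (fun ω => (Atr ω, A ω - Atr ω)) = Q1.prod Q2 := by
    have h1 : (fun ω => (Atr ω, A ω - Atr ω)) =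
        (fun p : ℝ × ℝ => (p.2, p.1 - p.2)) ∘ (fun ω => (A ω, Atr ω)) := rfl
    rw [h1, ← Measure.map_map hg (hA.prodMk hAtr), hjoint2,
      Measure.map_map hg hφ]
    have h2 : ((fun p : ℝ × ℝ => (p.2, p.1 - p.2)) ∘
          (fun p : ℝ × ℝ => (p.1, ε * p.1 + p.2))) = ⇑(thinEquiv ε).symm := by
      funext p
      obtain ⟨x, z⟩ := p
      simp only [Function.comp_apply, thinEquiv_symm_apply, Prod.mk.injEq]
      refine ⟨trivial, ?_⟩; ring
    rw [h2, hQmap]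
  -- Marginals.
  have hAte_meas : Measurable fun ω => A ω - Atr ω := hA.sub hAtr
  have hmar1 : μ.map Atr = Q1 := by
    have h1 : Atr = Prod.fst ∘ (fun ω => (Atr ω, A ω - Atr ω)) := rfl
    rw [h1, ← Measure.map_map measurable_fst (hAtr.prodMk hAte_meas), hpair]
    simp [measure_univ]
  have hmar2 : μ.map (fun ω => A ω - Atr ω) = Q2 := by
    have h1 : (fun ω => A ω - Atr ω) = Prod.snd ∘ (fun ω => (Atr ω, A ω - Atr ω)) := rfl
    rw [h1, ← Measure.map_map measurable_snd (hAtr.prodMk hAte_meas), hpair]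
    simp [measure_univ]
  refine ⟨hmar1, hmar2, ?_⟩
  rw [indepFun_iff_map_prod_eq_prod_map_map hAtr.aemeasurable hAte_meas.aemeasurable,
    hpair, hmar1, hmar2]
end

section
/- Let M ∈ (0,1) and γ ∈ (0, 1/2). Suppose A ~ Bernoulli(M), W ~ Bernoulli(γ) independent of A, and define A_tr := A(1-W) + (1-A)W and A_te := A. Then (i) A_tr ~ Bernoulli(M + γ - 2Mγ), and (ii) the conditional distribution of A_te given A_tr is Bernoulli(T) where T = M / (M + (1-M)(γ/(1-γ))^{2 A_tr - 1}). -/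
open MeasureTheory ProbabilityTheory

/-- Bernoulli fission: if `A ~ Bernoulli(M)`, `W ~ Bernoulli(γ)` independent of `A`,
`A_tr := A(1-W) + (1-A)W` (toggle `A` with probability `γ`) and `A_te := A`, then
(i) `A_tr ~ Bernoulli(M + γ - 2Mγ)`, and (ii) conditionally on `A_tr = s`,
`A_te ~ Bernoulli(T s)` with `T s = M / (M + (1-M)(γ/(1-γ))^(2s-1))`. -/
theorem bernoulli_fission
    {Ω : Type*} [MeasurableSpace Ω] (μ : Measure Ω) [IsProbabilityMeasure μ]
    (M γ : ℝ) (hM : M ∈ Set.Ioo (0 : ℝ) 1) (hγ : γ ∈ Set.Ioo (0 : ℝ) (1/2))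
    (A W : Ω → ℕ) (hA : Measurable A) (hW : Measurable W)
    (hA01 : ∀ ω, A ω ≤ 1) (hW01 : ∀ ω, W ω ≤ 1)
    (hAlaw : μ {ω | A ω = 1} = ENNReal.ofReal M)
    (hWlaw : μ {ω | W ω = 1} = ENNReal.ofReal γ)
    (hindep : IndepFun A W μ)
    (Atr Ate : Ω → ℕ)
    (hAtr : ∀ ω, Atr ω = A ω * (1 - W ω) + (1 - A ω) * W ω)
    (hAte : ∀ ω, Ate ω = A ω)
    (T : ℕ → ℝ)
    (hT : ∀ s : ℕ, T s = M / (M + (1 - M) * (γ / (1 - γ)) ^ (2 * (s : ℤ) - 1))) :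
    μ {ω | Atr ω = 1} = ENNReal.ofReal (M + γ - 2 * M * γ) ∧
    (∀ s : ℕ, s ≤ 1 →
      μ {ω | Ate ω = 1 ∧ Atr ω = s} = ENNReal.ofReal (T s) * μ {ω | Atr ω = s}) := by
  obtain ⟨hM0, hM1⟩ := hM
  obtain ⟨hγ0, hγ2⟩ := hγ
  have hγ1 : γ < 1 := by linarith
  have h1γ : (0:ℝ) < 1 - γ := by linarith
  have h1M : (0:ℝ) < 1 - M := by linarith
  -- measures of basic events
  have ha1 : μ (A ⁻¹' {1}) = ENNReal.ofReal M := hAlaw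
  have hw1 : μ (W ⁻¹' {1}) = ENNReal.ofReal γ := hWlaw
  have hA0set : A ⁻¹' {0} = (A ⁻¹' {1})ᶜ := by
    ext ω; have := hA01 ω; simp only [Set.mem_preimage, Set.mem_singleton_iff,
      Set.mem_compl_iff]; omega
  have hW0set : W ⁻¹' {0} = (W ⁻¹' {1})ᶜ := by
    ext ω; have := hW01 ω; simp only [Set.mem_preimage, Set.mem_singleton_iff,
      Set.mem_compl_iff]; omega
  have hsub : ∀ x : ℝ, 0 ≤ x → ENNReal.ofReal (1 - x) = 1 - ENNReal.ofReal x := by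
    intro x hx
    rw [ENNReal.ofReal_sub _ hx, ENNReal.ofReal_one]
  have ha0 : μ (A ⁻¹' {0}) = ENNReal.ofReal (1 - M) := by
    rw [hA0set, prob_compl_eq_one_sub (hA (measurableSet_singleton 1)), ha1,
      hsub M hM0.le]
  have hw0 : μ (W ⁻¹' {0}) = ENNReal.ofReal (1 - γ) := by
    rw [hW0set, prob_compl_eq_one_sub (hW (measurableSet_singleton 1)), hw1,
      hsub γ hγ0.le]
  have hprod : ∀ i j : ℕ, μ (A ⁻¹' {i} ∩ W ⁻¹' {j}) = μ (A ⁻¹' {i}) * μ (W ⁻¹' {j}) :=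
    fun i j => hindep.measure_inter_preimage_eq_mul _ _
      (measurableSet_singleton i) (measurableSet_singleton j)
  have hE10 : μ (A ⁻¹' {1} ∩ W ⁻¹' {0}) = ENNReal.ofReal (M * (1 - γ)) := by
    rw [hprod, ha1, hw0, ← ENNReal.ofReal_mul hM0.le]
  have hE01 : μ (A ⁻¹' {0} ∩ W ⁻¹' {1}) = ENNReal.ofReal ((1 - M) * γ) := by
    rw [hprod, ha0, hw1, ← ENNReal.ofReal_mul h1M.le]
  have hE11 : μ (A ⁻¹' {1} ∩ W ⁻¹' {1}) = ENNReal.ofReal (M * γ) := by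
    rw [hprod, ha1, hw1, ← ENNReal.ofReal_mul hM0.le]
  have hE00 : μ (A ⁻¹' {0} ∩ W ⁻¹' {0}) = ENNReal.ofReal ((1 - M) * (1 - γ)) := by
    rw [hprod, ha0, hw0, ← ENNReal.ofReal_mul h1M.le]
  -- set identities
  have hval : ∀ ω, (A ω = 0 ∨ A ω = 1) ∧ (W ω = 0 ∨ W ω = 1) := by
    intro ω
    have := hA01 ω; have := hW01 ω
    constructor <;> omega
  have hAtr1 : {ω | Atr ω = 1} = (A ⁻¹' {1} ∩ W ⁻¹' {0}) ∪ (A ⁻¹' {0} ∩ W ⁻¹' {1}) := by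
    ext ω
    obtain ⟨hA', hW'⟩ := hval ω
    simp only [Set.mem_setOf_eq, Set.mem_union, Set.mem_inter_iff, Set.mem_preimage,
      Set.mem_singleton_iff, hAtr ω]
    rcases hA' with h | h <;> rcases hW' with h' | h' <;> simp [h, h']
  have hAtr0 : {ω | Atr ω = 0} = (A ⁻¹' {0} ∩ W ⁻¹' {0}) ∪ (A ⁻¹' {1} ∩ W ⁻¹' {1}) := by
    ext ω
    obtain ⟨hA', hW'⟩ := hval ω
    simp only [Set.mem_setOf_eq, Set.mem_union, Set.mem_inter_iff, Set.mem_preimage,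
      Set.mem_singleton_iff, hAtr ω]
    rcases hA' with h | h <;> rcases hW' with h' | h' <;> simp [h, h']
  have hmeas : ∀ i j : ℕ, MeasurableSet (A ⁻¹' {i} ∩ W ⁻¹' {j}) := fun i j =>
    (hA (measurableSet_singleton i)).inter (hW (measurableSet_singleton j))
  have hdisj1 : Disjoint (A ⁻¹' {1} ∩ W ⁻¹' {0}) (A ⁻¹' {0} ∩ W ⁻¹' {1}) := by
    rw [Set.disjoint_left]
    rintro ω ⟨h1, _⟩ ⟨h2, _⟩
    simp only [Set.mem_preimage, Set.mem_singleton_iff] at h1 h2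
    omega
  have hdisj0 : Disjoint (A ⁻¹' {0} ∩ W ⁻¹' {0}) (A ⁻¹' {1} ∩ W ⁻¹' {1}) := by
    rw [Set.disjoint_left]
    rintro ω ⟨h1, _⟩ ⟨h2, _⟩
    simp only [Set.mem_preimage, Set.mem_singleton_iff] at h1 h2
    omega
  have hμtr1 : μ {ω | Atr ω = 1} = ENNReal.ofReal (M + γ - 2 * M * γ) := by
    rw [hAtr1, measure_union hdisj1 (hmeas 0 1), hE10, hE01,
      ← ENNReal.ofReal_add (by positivity) (by positivity)]
    congr 1; ring
  have hμtr0 : μ {ω | Atr ω = 0} = ENNReal.ofReal (M * γ + (1 - M) * (1 - γ)) := by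
    rw [hAtr0, measure_union hdisj0 (hmeas 1 1), hE00, hE11,
      ← ENNReal.ofReal_add (by positivity) (by positivity)]
    congr 1; ring
  -- closed forms for T
  have hT0 : T 0 = M * γ / (M * γ + (1 - M) * (1 - γ)) := by
    rw [hT 0]
    norm_num [zpow_neg]
    rw [div_eq_div_iff (by positivity) (by positivity)]
    field_simp
  have hT1 : T 1 = M * (1 - γ) / (M * (1 - γ) + (1 - M) * γ) := by
    rw [hT 1]
    norm_num
    rw [div_eq_div_iff (by positivity) (by positivity)]
    field_simp
  refine ⟨hμtr1, ?_⟩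
  intro s hs
  interval_cases s
  · -- s = 0 : the event is {A = 1, W = 1}
    have hset : {ω | Ate ω = 1 ∧ Atr ω = 0} = A ⁻¹' {1} ∩ W ⁻¹' {1} := by
      ext ω
      obtain ⟨hA', hW'⟩ := hval ω
      simp only [Set.mem_setOf_eq, Set.mem_inter_iff, Set.mem_preimage,
        Set.mem_singleton_iff, hAtr ω, hAte ω]
      rcases hA' with h | h <;> rcases hW' with h' | h' <;> simp [h, h']
    rw [hset, hE11, hμtr0, hT0, ← ENNReal.ofReal_mul (by positivity)]
    congr 1
    rw [div_mul_cancel₀]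
    positivity
  · -- s = 1 : the event is {A = 1, W = 0}
    have hset : {ω | Ate ω = 1 ∧ Atr ω = 1} = A ⁻¹' {1} ∩ W ⁻¹' {0} := by
      ext ω
      obtain ⟨hA', hW'⟩ := hval ω
      simp only [Set.mem_setOf_eq, Set.mem_inter_iff, Set.mem_preimage,
        Set.mem_singleton_iff, hAtr ω, hAte ω]
      rcases hA' with h | h <;> rcases hW' with h' | h' <;> simp [h, h']
    have hμtr1' : μ {ω | Atr ω = 1} = ENNReal.ofReal (M * (1 - γ) + (1 - M) * γ) := by
      rw [hμtr1]; congr 1; ring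
    rw [hset, hE10, hμtr1', hT1, ← ENNReal.ofReal_mul (by positivity)]
    congr 1
    rw [div_mul_cancel₀]
    positivity
end

section
/- Suppose A is an n×n random matrix with mutually independent entries A_ij ~ N(M_ij, τ²) with known τ². Let A = A_tr + A_te be a Gaussian thinning with parameter ε ∈ (0,1), so that conditional on A_tr, A_te has independent entries A_te,ij ~ N((1−ε)M_ij, (1−ε)τ²). Let Ẑ ∈ {0,1}^{n×K} be any community membership matrix that is a function of A_tr with ẐᵀẐ invertible, let u ∈ ℝ^{K²} be a unit vector depending on A_tr, and define θ := uᵀ vec((ẐᵀẐ)^{−1} Ẑᵀ M Ẑ (ẐᵀẐ)^{−1}), θ̂ := (1−ε)^{−1} uᵀ vec((ẐᵀẐ)^{−1} Ẑᵀ A_te Ẑ (ẐᵀẐ)^{−1}), and σ² := (1−ε)^{−1} τ² uᵀ ((ẐᵀẐ)^{−1} ⊗ (ẐᵀẐ)^{−1}) u. Then conditional on A_tr, θ̂ ~ N(θ, σ²); hence P(θ ∈ [θ̂ ± z_{1−α/2} σ] | A_tr) = 1 − α exactly. -/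
open MeasureTheory ProbabilityTheory Real

/-! ### Auxiliary analytic lemmas -/

lemma my_integral_quadratic {b : ℝ} (hb : 0 < b) (c d : ℝ) :
    ∫ x : ℝ, rexp (-b * x ^ 2 + c * x + d) = Real.sqrt (π / b) * rexp (d + c ^ 2 / (4 * b)) := by
  have h : ∀ x : ℝ, rexp (-b * x ^ 2 + c * x + d)
      = rexp (-b * (x + (-(c / (2 * b)))) ^ 2) * rexp (d + c ^ 2 / (4 * b)) := by
    intro x
    rw [← Real.exp_add]
    congr 1
    field_simp
    ring
  simp_rw [h]
  rw [integral_mul_const, integral_add_right_eq_self (fun x : ℝ => rexp (-b * x ^ 2)),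
    integral_gaussian]

lemma my_exp_quad_integrable {b : ℝ} (hb : 0 < b) (c d : ℝ) :
    Integrable (fun x : ℝ => rexp (-b * x ^ 2 + c * x + d)) := by
  have h : (fun x : ℝ => rexp (-b * x ^ 2 + c * x + d))
      = fun x => rexp (-b * (x + (-(c / (2 * b)))) ^ 2) * rexp (d + c ^ 2 / (4 * b)) := by
    funext x
    rw [← Real.exp_add]
    congr 1
    field_simp
    ring
  rw [h]
  exact ((integrable_exp_neg_mul_sq hb).comp_add_right _).mul_const _

lemma my_pdf_conv (m1 m2 : ℝ) {v1 v2 : NNReal} (h1 : v1 ≠ 0) (h2 : v2 ≠ 0) (y : ℝ) :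
    ∫ x, gaussianPDFReal m1 v1 x * gaussianPDFReal (m2 + x) v2 y
      = gaussianPDFReal (m1 + m2) (v1 + v2) y := by
  set a1 : ℝ := (v1 : ℝ) with ha1
  set a2 : ℝ := (v2 : ℝ) with ha2
  have p1 : (0:ℝ) < a1 := by exact_mod_cast h1.bot_lt
  have p2 : (0:ℝ) < a2 := by exact_mod_cast h2.bot_lt
  set b : ℝ := (a1 + a2) / (2 * a1 * a2) with hbdef
  have hb : 0 < b := by positivity
  set c : ℝ := m1 / a1 + (y - m2) / a2 with hcdef
  set d : ℝ := -(m1 ^ 2 / (2 * a1)) - (y - m2) ^ 2 / (2 * a2) with hddef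
  have hpt : ∀ x : ℝ, gaussianPDFReal m1 v1 x * gaussianPDFReal (m2 + x) v2 y
      = (Real.sqrt (2 * π * a1))⁻¹ * (Real.sqrt (2 * π * a2))⁻¹
        * rexp (-b * x ^ 2 + c * x + d) := by
    intro x
    simp only [gaussianPDFReal, ← ha1, ← ha2]
    have hexp : rexp (-(x - m1) ^ 2 / (2 * a1)) * rexp (-(y - (m2 + x)) ^ 2 / (2 * a2))
        = rexp (-b * x ^ 2 + c * x + d) := by
      rw [← Real.exp_add]
      congr 1
      rw [hbdef, hcdef, hddef]; field_simp; ring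
    rw [mul_mul_mul_comm, hexp]
  simp_rw [hpt]
  rw [integral_const_mul, my_integral_quadratic hb]
  have hsum : (((v1 + v2 : NNReal)) : ℝ) = a1 + a2 := by push_cast; ring
  have hK : (Real.sqrt (2 * π * a1))⁻¹ * (Real.sqrt (2 * π * a2))⁻¹ * Real.sqrt (π / b)
      = (Real.sqrt (2 * π * (a1 + a2)))⁻¹ := by
    rw [← Real.sqrt_inv, ← Real.sqrt_inv, ← Real.sqrt_mul (by positivity),
      ← Real.sqrt_mul (by positivity), ← Real.sqrt_inv]
    congr 1
    rw [hbdef]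
    field_simp
  have hE : d + c ^ 2 / (4 * b) = -(y - (m1 + m2)) ^ 2 / (2 * (a1 + a2)) := by
    rw [hbdef, hcdef, hddef]; field_simp; ring
  rw [gaussianPDFReal, hsum, ← hK, hE]
  ring

lemma my_pdf_prod_integrable (m1 m2 : ℝ) {v1 v2 : NNReal} (h1 : v1 ≠ 0) (h2 : v2 ≠ 0) (y : ℝ) :
    Integrable (fun x => gaussianPDFReal m1 v1 x * gaussianPDFReal (m2 + x) v2 y) := by
  set a1 : ℝ := (v1 : ℝ) with ha1
  set a2 : ℝ := (v2 : ℝ) with ha2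
  have p1 : (0:ℝ) < a1 := by exact_mod_cast h1.bot_lt
  have p2 : (0:ℝ) < a2 := by exact_mod_cast h2.bot_lt
  set b : ℝ := (a1 + a2) / (2 * a1 * a2) with hbdef
  have hb : 0 < b := by positivity
  set c : ℝ := m1 / a1 + (y - m2) / a2 with hcdef
  set d : ℝ := -(m1 ^ 2 / (2 * a1)) - (y - m2) ^ 2 / (2 * a2) with hddef
  have hpt : ∀ x : ℝ, gaussianPDFReal m1 v1 x * gaussianPDFReal (m2 + x) v2 y
      = (Real.sqrt (2 * π * a1))⁻¹ * (Real.sqrt (2 * π * a2))⁻¹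
        * rexp (-b * x ^ 2 + c * x + d) := by
    intro x
    simp only [gaussianPDFReal, ← ha1, ← ha2]
    have hexp : rexp (-(x - m1) ^ 2 / (2 * a1)) * rexp (-(y - (m2 + x)) ^ 2 / (2 * a2))
        = rexp (-b * x ^ 2 + c * x + d) := by
      rw [← Real.exp_add]
      congr 1
      rw [hbdef, hcdef, hddef]; field_simp; ring
    rw [mul_mul_mul_comm, hexp]
  simp_rw [hpt]
  exact (my_exp_quad_integrable hb c d).const_mul _

lemma my_gaussian_conv (m1 m2 : ℝ) (v1 v2 : NNReal) :
    (gaussianReal m1 v1).conv (gaussianReal m2 v2) = gaussianReal (m1 + m2) (v1 + v2) := by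
  rcases eq_or_ne v1 0 with rfl | h1
  · rw [gaussianReal_zero_var, Measure.conv, Measure.dirac_prod,
      Measure.map_map measurable_add (measurable_prodMk_left), zero_add]
    have : ((fun p : ℝ × ℝ => p.1 + p.2) ∘ Prod.mk m1) = (m1 + ·) := rfl
    rw [this, gaussianReal_map_const_add, add_comm m2 m1]
  rcases eq_or_ne v2 0 with rfl | h2
  · rw [gaussianReal_zero_var, Measure.conv, Measure.prod_dirac,
      Measure.map_map measurable_add (measurable_prodMk_right), add_zero]
    have : ((fun p : ℝ × ℝ => p.1 + p.2) ∘ (fun x => (x, m2))) = (· + m2) := rfl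
    rw [this, gaussianReal_map_add_const]
  have hmeasF : Measurable (fun q : ℝ × ℝ =>
      ENNReal.ofReal (gaussianPDFReal (m2 + q.1) v2 q.2)) := by
    apply Measurable.ennreal_ofReal
    simp only [gaussianPDFReal]
    fun_prop
  ext s hs
  rw [Measure.conv, Measure.map_apply measurable_add hs,
    Measure.prod_apply (measurable_add hs)]
  have hsec : ∀ x : ℝ, (Prod.mk x ⁻¹' ((fun p : ℝ × ℝ => p.1 + p.2) ⁻¹' s))
      = (fun y => x + y) ⁻¹' s := fun x => rfl
  simp_rw [hsec]
  have hmap : ∀ x : ℝ, gaussianReal m2 v2 ((fun y => x + y) ⁻¹' s)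
      = ∫⁻ y in s, ENNReal.ofReal (gaussianPDFReal (m2 + x) v2 y) := by
    intro x
    have h := gaussianReal_map_const_add (μ := m2) (v := v2) x
    rw [← Measure.map_apply (measurable_const_add x) hs, h, gaussianReal_apply _ h2]
    rfl
  simp_rw [hmap]
  rw [gaussianReal_of_var_ne_zero m1 h1,
    lintegral_withDensity_eq_lintegral_mul _ (measurable_gaussianPDF m1 v1)
      (Measurable.lintegral_prod_right' hmeasF)]
  simp only [Pi.mul_apply]
  have hinner : ∀ x : ℝ, gaussianPDF m1 v1 x *
      ∫⁻ y in s, ENNReal.ofReal (gaussianPDFReal (m2 + x) v2 y)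
      = ∫⁻ y in s, ENNReal.ofReal (gaussianPDFReal m1 v1 x * gaussianPDFReal (m2 + x) v2 y) := by
    intro x
    show gaussianPDF m1 v1 x * ∫⁻ y in s, gaussianPDF (m2 + x) v2 y = _
    rw [← lintegral_const_mul _ (measurable_gaussianPDF (m2 + x) v2)]
    congr 1
    funext y
    exact (ENNReal.ofReal_mul (gaussianPDFReal_nonneg _ _ _)).symm
  simp_rw [hinner]
  rw [lintegral_lintegral_swap]
  · have hx : ∀ y : ℝ, ∫⁻ x, ENNReal.ofReal (gaussianPDFReal m1 v1 x * gaussianPDFReal (m2 + x) v2 y)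
        = ENNReal.ofReal (gaussianPDFReal (m1 + m2) (v1 + v2) y) := by
      intro y
      rw [← ofReal_integral_eq_lintegral_ofReal (my_pdf_prod_integrable m1 m2 h1 h2 y)
        (Filter.Eventually.of_forall (fun x =>
          mul_nonneg (gaussianPDFReal_nonneg _ _ _) (gaussianPDFReal_nonneg _ _ _))),
        my_pdf_conv m1 m2 h1 h2 y]
    simp_rw [hx]
    rw [gaussianReal_apply _ (by simp [h1]), gaussianPDF_def]
  · apply (Measurable.aemeasurable ?_)
    apply Measurable.ennreal_ofReal
    simp only [gaussianPDFReal, Function.uncurry]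
    fun_prop

/-! ### Sums of independent Gaussians -/

lemma my_indep_gaussian_add {Ω : Type*} [MeasurableSpace Ω] {μ : Measure Ω}
    [IsProbabilityMeasure μ] {X Y : Ω → ℝ} (hX : Measurable X) (hY : Measurable Y)
    (h : IndepFun X Y μ) {m1 m2 : ℝ} {v1 v2 : NNReal}
    (hXl : μ.map X = gaussianReal m1 v1) (hYl : μ.map Y = gaussianReal m2 v2) :
    μ.map (X + Y) = gaussianReal (m1 + m2) (v1 + v2) := by
  have hprod := (indepFun_iff_map_prod_eq_prod_map_map hX.aemeasurable hY.aemeasurable).mp h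
  have : μ.map (X + Y) = ((μ.map X).prod (μ.map Y)).map (fun p : ℝ × ℝ => p.1 + p.2) := by
    rw [← hprod, Measure.map_map measurable_add (hX.prodMk hY)]
    rfl
  rw [this, hXl, hYl, ← Measure.conv, my_gaussian_conv]

lemma my_indep_gaussian_sum {Ω : Type*} [MeasurableSpace Ω] {μ : Measure Ω}
    [IsProbabilityMeasure μ] {ι : Type*} {X : ι → Ω → ℝ}
    (hX : ∀ i, Measurable (X i))
    (hindep : iIndepFun X μ)
    {m : ι → ℝ} {v : ι → NNReal}
    (hXl : ∀ i, μ.map (X i) = gaussianReal (m i) (v i)) (s : Finset ι) :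
    μ.map (fun ω => ∑ i ∈ s, X i ω) = gaussianReal (∑ i ∈ s, m i) (∑ i ∈ s, v i) := by
  classical
  induction s using Finset.induction_on with
  | empty =>
      simp only [Finset.sum_empty]
      rw [show (fun _ : Ω => (0:ℝ)) = fun _ => (0:ℝ) from rfl, Measure.map_const,
        gaussianReal_zero_var]
      simp
  | insert a t hi ih =>
      simp only [Finset.sum_insert hi]
      have hind : IndepFun (∑ j ∈ t, X j) (X a) μ :=
        hindep.indepFun_finsetSum_of_notMem hX hi
      have hind' : IndepFun (X a) (fun ω => ∑ i ∈ t, X i ω) μ := by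
        have : (∑ j ∈ t, X j) = fun ω => ∑ i ∈ t, X i ω := by
          funext ω; simp [Finset.sum_apply]
        rw [← this]; exact hind.symm
      have h := my_indep_gaussian_add (hX a) (t.measurable_sum (fun i _ => hX i))
        hind' (hXl a) ih
      rw [show (X a + fun ω => ∑ i ∈ t, X i ω) = fun ω => X a ω + ∑ i ∈ t, X i ω from rfl] at h
      exact h

/-! ### Standard Gaussian facts -/

lemma my_gaussian_neg_map : (gaussianReal 0 1).map (fun x : ℝ => -x) = gaussianReal 0 1 := by
  have h := gaussianReal_map_const_mul (μ := 0) (v := 1) (-1)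
  simp only [neg_one_mul, mul_zero] at h
  convert h using 2
  norm_num

lemma my_gaussian_singleton (z : ℝ) : gaussianReal 0 1 {z} = 0 :=
  gaussianReal_absolutelyContinuous 0 one_ne_zero (measure_singleton z)

lemma my_gaussian_Iio (z : ℝ) : gaussianReal 0 1 (Set.Iio z) = gaussianReal 0 1 (Set.Iic z) := by
  rw [← Set.Iio_union_right]
  rw [measure_union (by simp) (measurableSet_singleton z), my_gaussian_singleton, add_zero]

lemma my_gaussian_symm (z : ℝ) :
    gaussianReal 0 1 (Set.Iic (-z)) = 1 - gaussianReal 0 1 (Set.Iic z) := by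
  have h1 : gaussianReal 0 1 (Set.Iic (-z))
      = ((gaussianReal 0 1).map (fun x : ℝ => -x)) (Set.Iic (-z)) := by
    rw [my_gaussian_neg_map]
  rw [h1, Measure.map_apply measurable_neg measurableSet_Iic]
  have h2 : (fun x : ℝ => -x) ⁻¹' Set.Iic (-z) = Set.Ici z := by
    ext x; simp
  rw [h2, ← Set.compl_Iio, measure_compl measurableSet_Iio (measure_ne_top _ _),
    my_gaussian_Iio]
  simp

lemma my_gaussian_half : gaussianReal 0 1 (Set.Iic (0:ℝ)) = 1/2 := by
  have h := my_gaussian_symm 0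
  rw [neg_zero] at h
  have hle : gaussianReal 0 1 (Set.Iic (0:ℝ)) ≤ 1 := prob_le_one
  have htot : gaussianReal 0 1 (Set.Iic (0:ℝ)) + gaussianReal 0 1 (Set.Iic (0:ℝ)) = 1 := by
    nth_rewrite 2 [h]
    rw [add_tsub_cancel_iff_le.mpr hle]
  rw [← two_mul] at htot
  rw [ENNReal.eq_div_iff (by norm_num) (by norm_num), ← htot]

lemma my_gaussian_interval {α zq : ℝ} (hα : α ∈ Set.Ioo (0:ℝ) 1)
    (hzq : (gaussianReal 0 1) (Set.Iic zq) = ENNReal.ofReal (1 - α / 2)) :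
    gaussianReal 0 1 (Set.Icc (-zq) zq) = ENNReal.ofReal (1 - α) := by
  obtain ⟨hα0, hα1⟩ := hα
  have hzq_pos : 0 ≤ zq := by
    by_contra hneg
    push_neg at hneg
    have hsub : Set.Iic zq ⊆ Set.Iic (0:ℝ) := Set.Iic_subset_Iic.mpr hneg.le
    have := measure_mono (μ := gaussianReal 0 1) hsub
    rw [hzq, my_gaussian_half] at this
    have h2 := ENNReal.toReal_mono (by norm_num) this
    rw [ENNReal.toReal_ofReal (by linarith)] at h2
    norm_num at h2
    linarith
  have hIcc : Set.Icc (-zq) zq = Set.Iic zq \ Set.Iio (-zq) := by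
    ext x
    simp only [Set.mem_Icc, Set.mem_diff, Set.mem_Iic, Set.mem_Iio, not_lt]
    tauto
  have hlow : gaussianReal 0 1 (Set.Iio (-zq)) = ENNReal.ofReal (α / 2) := by
    rw [my_gaussian_Iio, my_gaussian_symm, hzq]
    rw [← ENNReal.ofReal_one, ← ENNReal.ofReal_sub _ (by linarith)]
    norm_num
  have hsub : Set.Iio (-zq) ⊆ Set.Iic zq :=
    Set.Iio_subset_Iic_self.trans (Set.Iic_subset_Iic.mpr (by linarith))
  rw [hIcc, measure_diff hsub measurableSet_Iio.nullMeasurableSet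
    (measure_ne_top _ _), hzq, hlow, ← ENNReal.ofReal_sub _ (by linarith)]
  ring_nf

lemma my_gaussian_Icc {θt σsq : ℝ} (hσ : 0 < σsq) {α zq : ℝ} (hα : α ∈ Set.Ioo (0:ℝ) 1)
    (hzq : (gaussianReal 0 1) (Set.Iic zq) = ENNReal.ofReal (1 - α / 2)) :
    gaussianReal θt σsq.toNNReal
      (Set.Icc (θt - zq * Real.sqrt σsq) (θt + zq * Real.sqrt σsq))
      = ENNReal.ofReal (1 - α) := by
  set σ := Real.sqrt σsq with hσdef
  have hσp : 0 < σ := Real.sqrt_pos.mpr hσ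
  have hσsq : σ ^ 2 = σsq := Real.sq_sqrt hσ.le
  set g : ℝ → ℝ := fun x => σ⁻¹ * (x + -θt) with hg
  have hmapg : (gaussianReal θt σsq.toNNReal).map g = gaussianReal 0 1 := by
    have hcomp : g = (fun x => σ⁻¹ * x) ∘ (fun x => x + -θt) := rfl
    rw [hcomp, ← Measure.map_map (measurable_const_mul σ⁻¹) (measurable_add_const (-θt)),
      gaussianReal_map_add_const, add_neg_cancel, gaussianReal_map_const_mul, mul_zero]
    congr 1
    ext
    push_cast
    rw [Real.coe_toNNReal _ hσ.le]
    field_simp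
    rw [← hσsq]
  have hpre : g ⁻¹' (Set.Icc (-zq) zq) = Set.Icc (θt - zq * σ) (θt + zq * σ) := by
    ext x
    simp only [Set.mem_preimage, Set.mem_Icc, hg]
    constructor
    · rintro ⟨h1, h2⟩
      rw [inv_mul_le_iff₀ hσp] at h2
      rw [le_inv_mul_iff₀ hσp] at h1
      constructor <;> nlinarith
    · rintro ⟨h1, h2⟩
      rw [inv_mul_le_iff₀ hσp, le_inv_mul_iff₀ hσp]
      constructor <;> nlinarith
  rw [← hpre, ← Measure.map_apply (by fun_prop) measurableSet_Icc, hmapg,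
    my_gaussian_interval hα hzq]

/-! ### Sum rearrangement lemmas -/

lemma my_key (n K : ℕ) (R : Matrix (Fin K) (Fin n) ℝ) (u : Fin K × Fin K → ℝ)
    (A : Matrix (Fin n) (Fin n) ℝ) :
    ∑ p : Fin K × Fin K, u p * (∑ j, (∑ i, R p.1 i * A i j) * R p.2 j)
      = ∑ q : Fin n × Fin n, (∑ p : Fin K × Fin K, u p * (R p.1 q.1 * R p.2 q.2)) * A q.1 q.2 := by
  simp only [Finset.sum_mul, Finset.mul_sum, Fintype.sum_prod_type]
  conv_lhs => enter [2, p1, 2, p2]; rw [Finset.sum_comm]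
  conv_rhs => enter [2, i]; rw [Finset.sum_comm]
  conv_rhs => rw [Finset.sum_comm]
  conv_rhs => enter [2, p1, 2, i]; rw [Finset.sum_comm]
  conv_rhs => enter [2, p1]; rw [Finset.sum_comm]
  refine Finset.sum_congr rfl fun p1 _ => Finset.sum_congr rfl fun p2 _ =>
    Finset.sum_congr rfl fun i _ => Finset.sum_congr rfl fun j _ => by ring

lemma my_var_key (n K : ℕ) (R : Matrix (Fin K) (Fin n) ℝ) (u : Fin K × Fin K → ℝ) :
    ∑ q : Fin n × Fin n, (∑ p : Fin K × Fin K, u p * (R p.1 q.1 * R p.2 q.2)) ^ 2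
      = ∑ p : Fin K × Fin K, ∑ r : Fin K × Fin K,
          u p * ((∑ i, R p.1 i * R r.1 i) * (∑ j, R p.2 j * R r.2 j)) * u r := by
  have h1 : ∀ q : Fin n × Fin n, (∑ p : Fin K × Fin K, u p * (R p.1 q.1 * R p.2 q.2)) ^ 2
      = ∑ p : Fin K × Fin K, ∑ r : Fin K × Fin K,
          (u p * (R p.1 q.1 * R p.2 q.2)) * (u r * (R r.1 q.1 * R r.2 q.2)) := by
    intro q
    rw [pow_two, Finset.sum_mul_sum]
  simp_rw [h1]
  rw [Finset.sum_comm]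
  refine Finset.sum_congr rfl fun p _ => ?_
  rw [Finset.sum_comm]
  refine Finset.sum_congr rfl fun r _ => ?_
  rw [Finset.sum_mul_sum]
  simp only [Fintype.sum_prod_type, Finset.mul_sum, Finset.sum_mul]
  refine Finset.sum_congr rfl fun i _ => Finset.sum_congr rfl fun j _ => by ring

lemma my_rec_key (n K : ℕ) (R : Matrix (Fin K) (Fin n) ℝ) (u : Fin K × Fin K → ℝ)
    (W V : Fin n → ℝ) :
    ∑ q : Fin n × Fin n, (∑ p : Fin K × Fin K, u p * (R p.1 q.1 * R p.2 q.2)) * (W q.1 * V q.2)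
      = ∑ p : Fin K × Fin K, u p * ((∑ i, R p.1 i * W i) * (∑ j, R p.2 j * V j)) := by
  have h1 : ∀ q : Fin n × Fin n,
      (∑ p : Fin K × Fin K, u p * (R p.1 q.1 * R p.2 q.2)) * (W q.1 * V q.2)
      = ∑ p : Fin K × Fin K, (u p * (R p.1 q.1 * R p.2 q.2)) * (W q.1 * V q.2) := by
    intro q; rw [Finset.sum_mul]
  simp_rw [h1]
  rw [Finset.sum_comm]
  refine Finset.sum_congr rfl fun p _ => ?_
  rw [Finset.sum_mul_sum]
  simp only [Fintype.sum_prod_type, Finset.mul_sum, Finset.sum_mul]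
  refine Finset.sum_congr rfl fun i _ => Finset.sum_congr rfl fun j _ => by ring

/-! ### Main theorem -/

/-- Exact finite-sample selective inference for Gaussian networks (conditional on the
train network): if, conditional on `A_tr`, the test network `A_te` has mutually
independent entries `A_te,ij ~ N((1−ε) M_ij, (1−ε)τ²)`, `Ẑ` is a membership matrix with
`ẐᵀẐ` invertible, and `u` is a unit vector, then
`θ̂ := (1−ε)⁻¹ uᵀ vec((ẐᵀẐ)⁻¹ Ẑᵀ A_te Ẑ (ẐᵀẐ)⁻¹) ~ N(θ, σ²)` with
`θ := uᵀ vec((ẐᵀẐ)⁻¹ Ẑᵀ M Ẑ (ẐᵀẐ)⁻¹)` and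
`σ² := (1−ε)⁻¹ τ² uᵀ ((ẐᵀẐ)⁻¹ ⊗ (ẐᵀẐ)⁻¹) u`, so the interval
`θ̂ ± z_{1−α/2} σ` covers `θ` with probability exactly `1 − α`. -/
theorem gaussian_selective_inference
    {Ω : Type*} [MeasurableSpace Ω] (μ : Measure Ω) [IsProbabilityMeasure μ]
    (n K : ℕ) (Z : Matrix (Fin n) (Fin K) ℝ)
    (hZ01 : ∀ i k, Z i k = 0 ∨ Z i k = 1)
    (hZrow : ∀ i, ∑ k, Z i k = 1)
    (hZunit : IsUnit (Z.transpose * Z).det)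
    (M : Matrix (Fin n) (Fin n) ℝ) (τsq ε α zq : ℝ)
    (hτ : 0 < τsq) (hε : ε ∈ Set.Ioo (0 : ℝ) 1) (hα : α ∈ Set.Ioo (0 : ℝ) 1)
    (hzq : (gaussianReal 0 1) (Set.Iic zq) = ENNReal.ofReal (1 - α / 2))
    (u : Fin K × Fin K → ℝ) (hu : ∑ p, (u p) ^ 2 = 1)
    (Ate : Ω → Matrix (Fin n) (Fin n) ℝ)
    (hmeas : ∀ i j, Measurable fun ω => Ate ω i j)
    (hlaw : ∀ i j, μ.map (fun ω => Ate ω i j) =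
      gaussianReal ((1 - ε) * M i j) (((1 - ε) * τsq).toNNReal))
    (hindep : iIndepFun
      (fun (q : Fin n × Fin n) ω => Ate ω q.1 q.2) μ) :
    let Ninv := (Z.transpose * Z)⁻¹
    let B := fun (X : Matrix (Fin n) (Fin n) ℝ) =>
      Ninv * Z.transpose * X * Z * Ninv
    let θ := ∑ p : Fin K × Fin K, u p * B M p.1 p.2
    let θhat := fun ω => (1 - ε)⁻¹ * ∑ p : Fin K × Fin K, u p * B (Ate ω) p.1 p.2
    let σsq := (1 - ε)⁻¹ * τsq * ∑ p : Fin K × Fin K, ∑ q : Fin K × Fin K,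
      u p * (Ninv p.1 q.1 * Ninv p.2 q.2) * u q
    μ.map θhat = gaussianReal θ σsq.toNNReal ∧
    μ {ω | θhat ω - zq * Real.sqrt σsq ≤ θ ∧ θ ≤ θhat ω + zq * Real.sqrt σsq} =
      ENNReal.ofReal (1 - α) := by
  intro Ninv B θ θhat σsq
  have hε1 : (0:ℝ) < 1 - ε := by linarith [hε.2]
  have hεne : (1:ℝ) - ε ≠ 0 := ne_of_gt hε1
  set R : Matrix (Fin K) (Fin n) ℝ := Ninv * Z.transpose with hRdef
  -- matrix identities
  have hNsymm : Ninv.transpose = Ninv := by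
    show ((Z.transpose * Z)⁻¹).transpose = (Z.transpose * Z)⁻¹
    rw [Matrix.transpose_nonsing_inv, Matrix.transpose_mul, Matrix.transpose_transpose]
  have hRR : ∀ a b, ∑ i, R a i * R b i = Ninv a b := by
    have hmat : R * R.transpose = Ninv := by
      rw [hRdef, Matrix.transpose_mul, Matrix.transpose_transpose, hNsymm]
      calc ((Z.transpose * Z)⁻¹ * Z.transpose) * (Z * (Z.transpose * Z)⁻¹)
          = (Z.transpose * Z)⁻¹ * (Z.transpose * Z) * (Z.transpose * Z)⁻¹ := by
            simp only [Matrix.mul_assoc]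
        _ = (Z.transpose * Z)⁻¹ := by
            rw [Matrix.nonsing_inv_mul _ hZunit, Matrix.one_mul]
    intro a b
    have h := congrFun (congrFun hmat a) b
    rw [← h, Matrix.mul_apply]
    exact Finset.sum_congr rfl fun i _ => by rw [Matrix.transpose_apply]
  have hRZ : ∀ a b, ∑ i, R a i * Z i b = (1 : Matrix (Fin K) (Fin K) ℝ) a b := by
    have hmat : R * Z = 1 := by
      rw [hRdef, Matrix.mul_assoc, Matrix.nonsing_inv_mul _ hZunit]
    intro a b
    have h := congrFun (congrFun hmat a) b
    rw [← h, Matrix.mul_apply]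
  have hB : ∀ (X : Matrix (Fin n) (Fin n) ℝ) (p : Fin K × Fin K),
      B X p.1 p.2 = ∑ j, (∑ i, R p.1 i * X i j) * R p.2 j := by
    intro X p
    have hmat : Ninv * Z.transpose * X * Z * Ninv = (R * X) * R.transpose := by
      rw [hRdef, Matrix.transpose_mul, Matrix.transpose_transpose, hNsymm]
      simp only [Matrix.mul_assoc]
    show (Ninv * Z.transpose * X * Z * Ninv) p.1 p.2 = _
    rw [hmat, Matrix.mul_apply]
    exact Finset.sum_congr rfl fun j _ => by rw [Matrix.mul_apply, Matrix.transpose_apply]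
  -- the scaled entries
  set d : Fin n × Fin n → ℝ :=
    fun q => ∑ p : Fin K × Fin K, u p * (R p.1 q.1 * R p.2 q.2) with hddef
  set c : Fin n × Fin n → ℝ := fun q => (1 - ε)⁻¹ * d q with hcdef
  set Y : Fin n × Fin n → Ω → ℝ := fun q ω => c q * Ate ω q.1 q.2 with hYdef
  set m' : Fin n × Fin n → ℝ := fun q => c q * ((1 - ε) * M q.1 q.2) with hm'def
  set v' : Fin n × Fin n → NNReal :=
    fun q => ((c q) ^ 2 * ((1 - ε) * τsq)).toNNReal with hv'def
  have hYmeas : ∀ q, Measurable (Y q) := fun q => (hmeas q.1 q.2).const_mul (c q)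
  have hYindep : iIndepFun Y μ :=
    hindep.comp (fun q (x : ℝ) => c q * x) (fun q => measurable_const_mul _)
  have hw : (0:ℝ) ≤ (1 - ε) * τsq := by positivity
  have hYlaw : ∀ q, μ.map (Y q) = gaussianReal (m' q) (v' q) := by
    intro q
    have hc : Y q = (fun x => c q * x) ∘ (fun ω => Ate ω q.1 q.2) := rfl
    rw [hc, ← Measure.map_map (measurable_const_mul (c q)) (hmeas q.1 q.2), hlaw q.1 q.2,
      gaussianReal_map_const_mul]
    congr 1
    ext
    push_cast
    rw [Real.coe_toNNReal _ hw, Real.coe_toNNReal _ (by positivity)]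
  have hmain := my_indep_gaussian_sum hYmeas hYindep hYlaw Finset.univ
  -- identification of θhat
  have hθhat : θhat = fun ω => ∑ q : Fin n × Fin n, Y q ω := by
    funext ω
    show (1 - ε)⁻¹ * ∑ p : Fin K × Fin K, u p * B (Ate ω) p.1 p.2
        = ∑ q : Fin n × Fin n, c q * Ate ω q.1 q.2
    have h1 : ∑ p : Fin K × Fin K, u p * B (Ate ω) p.1 p.2
        = ∑ q : Fin n × Fin n, d q * Ate ω q.1 q.2 := by
      simp_rw [hB (Ate ω)]
      exact my_key n K R u (Ate ω)
    rw [h1, Finset.mul_sum]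
    exact Finset.sum_congr rfl fun q _ => by rw [hcdef]; ring
  -- mean identification
  have hθsum : ∑ q : Fin n × Fin n, m' q = θ := by
    show ∑ q : Fin n × Fin n, m' q = ∑ p : Fin K × Fin K, u p * B M p.1 p.2
    have h1 : ∑ p : Fin K × Fin K, u p * B M p.1 p.2
        = ∑ q : Fin n × Fin n, d q * M q.1 q.2 := by
      simp_rw [hB M]
      exact my_key n K R u M
    rw [h1]
    refine Finset.sum_congr rfl fun q _ => ?_
    rw [hm'def, hcdef]
    show ((1 - ε)⁻¹ * d q) * ((1 - ε) * M q.1 q.2) = d q * M q.1 q.2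
    field_simp
  -- variance identification
  have hσ_eq : σsq = (1 - ε)⁻¹ * τsq * ∑ q : Fin n × Fin n, (d q) ^ 2 := by
    show (1 - ε)⁻¹ * τsq * ∑ p : Fin K × Fin K, ∑ r : Fin K × Fin K,
        u p * (Ninv p.1 r.1 * Ninv p.2 r.2) * u r = _
    congr 1
    have h := my_var_key n K R u
    simp_rw [hRR] at h
    rw [← h]
  have hvsum_real : ∑ q : Fin n × Fin n, (c q) ^ 2 * ((1 - ε) * τsq) = σsq := by
    have h1 : ∀ q : Fin n × Fin n, (c q) ^ 2 * ((1 - ε) * τsq)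
        = (1 - ε)⁻¹ * τsq * (d q) ^ 2 := by
      intro q
      rw [hcdef]
      show ((1 - ε)⁻¹ * d q) ^ 2 * ((1 - ε) * τsq) = _
      field_simp
    rw [Finset.sum_congr rfl (fun q _ => h1 q), ← Finset.mul_sum, ← hσ_eq]
  -- positivity of the variance
  have hσpos : 0 < σsq := by
    rw [hσ_eq]
    have hne : ∃ q, d q ≠ 0 := by
      by_contra hall
      push_neg at hall
      have hu0 : ∀ k : Fin K × Fin K, u k = 0 := by
        intro k
        have h := my_rec_key n K R u (fun i => Z i k.1) (fun j => Z j k.2)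
        simp_rw [hRZ] at h
        rw [show (∑ q : Fin n × Fin n,
            (∑ p : Fin K × Fin K, u p * (R p.1 q.1 * R p.2 q.2)) * (Z q.1 k.1 * Z q.2 k.2))
          = ∑ q : Fin n × Fin n, d q * (Z q.1 k.1 * Z q.2 k.2) from rfl] at h
        simp only [hall, zero_mul, Finset.sum_const_zero] at h
        have h2 : (0:ℝ) = ∑ p : Fin K × Fin K,
            u p * ((1 : Matrix (Fin K) (Fin K) ℝ) p.1 k.1
              * (1 : Matrix (Fin K) (Fin K) ℝ) p.2 k.2) := h
        rw [Fintype.sum_prod_type] at h2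
        simp only [Matrix.one_apply, mul_ite, ite_mul, mul_one, one_mul, mul_zero, zero_mul,
          Finset.sum_ite_eq', Finset.mem_univ, if_true] at h2
        simpa using h2.symm
      have hzero : ∑ p : Fin K × Fin K, (u p) ^ 2 = 0 :=
        Finset.sum_eq_zero (fun p _ => by rw [hu0 p]; ring)
      rw [hu] at hzero
      norm_num at hzero
    obtain ⟨q0, hq0⟩ := hne
    have hsum : 0 < ∑ q : Fin n × Fin n, (d q) ^ 2 :=
      Finset.sum_pos' (fun q _ => sq_nonneg _) ⟨q0, Finset.mem_univ _, by positivity⟩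
    have : 0 < (1 - ε)⁻¹ * τsq := by positivity
    exact mul_pos this hsum
  -- variance as NNReal
  have hvsum : ∑ q : Fin n × Fin n, v' q = σsq.toNNReal := by
    rw [hv'def]
    show ∑ q : Fin n × Fin n, ((c q) ^ 2 * ((1 - ε) * τsq)).toNNReal = _
    rw [← Real.toNNReal_sum_of_nonneg (fun q _ => by positivity), hvsum_real]
  -- part 1
  have hmap1 : μ.map θhat = gaussianReal θ σsq.toNNReal := by
    rw [hθhat]
    rw [show (fun ω => ∑ q : Fin n × Fin n, Y q ω)
      = fun ω => ∑ q ∈ Finset.univ, Y q ω from rfl, hmain, hθsum, hvsum]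
  refine ⟨hmap1, ?_⟩
  -- part 2
  have hθhatmeas : Measurable θhat := by
    rw [hθhat]
    exact Finset.measurable_sum _ (fun q _ => hYmeas q)
  have hset : {ω | θhat ω - zq * Real.sqrt σsq ≤ θ ∧ θ ≤ θhat ω + zq * Real.sqrt σsq}
      = θhat ⁻¹' (Set.Icc (θ - zq * Real.sqrt σsq) (θ + zq * Real.sqrt σsq)) := by
    ext ω
    simp only [Set.mem_setOf_eq, Set.mem_preimage, Set.mem_Icc]
    constructor
    · rintro ⟨h1, h2⟩; constructor <;> linarith
    · rintro ⟨h1, h2⟩; constructor <;> linarith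
  rw [hset, ← Measure.map_apply hθhatmeas measurableSet_Icc, hmap1,
    my_gaussian_Icc hσpos hα hzq]
end

section
/- Let I⁽⁰⁾ be a nonempty finite set, M_i ∈ (0,1) for i ∈ I⁽⁰⁾, and for γ ∈ (0, 1/2) let d₀ := γ/(1−γ). Define Φ⁽⁰⁾(γ) := expit(logit((1/|I⁽⁰⁾|) Σ_i expit(logit(M_i) + log(d₀))) − log(d₀)). Then lim_{γ→0⁺} Φ⁽⁰⁾(γ) = expit(log(Λ⁽⁰⁾)), where Λ⁽⁰⁾ := (1/|I⁽⁰⁾|) Σ_i M_i/(1−M_i) is the arithmetic mean of the odds. -/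
open Filter

/-- `expit x = e^x / (1 + e^x)`. -/
noncomputable def expit (x : ℝ) : ℝ := Real.exp x / (1 + Real.exp x)

/-- `logit a = log (a / (1 - a))`. -/
noncomputable def logit (a : ℝ) : ℝ := Real.log (a / (1 - a))

lemma expit_continuous : Continuous expit := by
  apply Continuous.div Real.continuous_exp (by continuity)
  intro x
  positivity

lemma expit_log (y : ℝ) (hy : 0 < y) : expit (Real.log y) = y / (1 + y) := by
  simp [expit, Real.exp_log hy]

/-- As `γ → 0⁺`, the fission-adjusted block mean `Φ⁽⁰⁾(γ)` over indices with train value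
`0` converges to `expit(log Λ⁽⁰⁾)`, where `Λ⁽⁰⁾` is the arithmetic mean of the odds
`M i / (1 - M i)`. -/
theorem phi0_limit_gamma_to_zero
    {ι : Type*} (I0 : Finset ι) (h0 : I0.Nonempty)
    (M : ι → ℝ) (hM : ∀ i ∈ I0, M i ∈ Set.Ioo (0 : ℝ) 1) :
    Tendsto
      (fun γ : ℝ => expit (logit ((I0.card : ℝ)⁻¹ *
          ∑ i ∈ I0, expit (logit (M i) + Real.log (γ / (1 - γ)))) -
        Real.log (γ / (1 - γ))))
      (nhdsWithin 0 (Set.Ioo (0 : ℝ) (1/2)))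
      (nhds (expit (Real.log ((I0.card : ℝ)⁻¹ * ∑ i ∈ I0, M i / (1 - M i))))) := by
  set n : ℝ := (I0.card : ℝ) with hn'
  have hn : 0 < n := by rw [hn']; exact_mod_cast Finset.card_pos.mpr h0
  set r : ι → ℝ := fun i => M i / (1 - M i) with hrdef
  have hrpos : ∀ i ∈ I0, 0 < r i := fun i hi =>
    div_pos (hM i hi).1 (by linarith [(hM i hi).2])
  set Λ : ℝ := n⁻¹ * ∑ i ∈ I0, r i with hΛdef
  have hΛpos : 0 < Λ :=
    mul_pos (inv_pos.mpr hn) (Finset.sum_pos hrpos h0)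
  set d : ℝ → ℝ := fun γ => γ / (1 - γ) with hddef
  set T : ℝ → ℝ := fun γ => n⁻¹ * ∑ i ∈ I0, r i / (1 + d γ * r i) with hTdef
  -- d tends to 0
  have hdT : Tendsto d (nhdsWithin 0 (Set.Ioo (0:ℝ) (1/2))) (nhds 0) := by
    have hc : ContinuousAt d 0 :=
      ContinuousAt.div continuousAt_id (by fun_prop) (by norm_num)
    have h2 : Tendsto d (nhdsWithin 0 (Set.Ioo (0:ℝ) (1/2))) (nhds (d 0)) :=
      hc.tendsto.mono_left nhdsWithin_le_nhds
    simpa [hddef] using h2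
  -- T tends to Λ
  have hTt : Tendsto T (nhdsWithin 0 (Set.Ioo (0:ℝ) (1/2))) (nhds Λ) := by
    have hsumT : Tendsto (fun γ => ∑ i ∈ I0, r i / (1 + d γ * r i))
        (nhdsWithin 0 (Set.Ioo (0:ℝ) (1/2))) (nhds (∑ i ∈ I0, r i)) := by
      have h := tendsto_finset_sum (f := fun i γ => r i / (1 + d γ * r i))
        (a := fun i => r i / (1 + 0 * r i)) I0 (fun i _ => by
          exact tendsto_const_nhds.div
            (tendsto_const_nhds.add (hdT.mul tendsto_const_nhds)) (by norm_num))
      simpa using h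
    have h2 := (tendsto_const_nhds (x := n⁻¹)).mul hsumT
    simpa [hTdef, hΛdef] using h2
  -- g tends to Λ
  have hgt : Tendsto (fun γ => T γ / (1 - d γ * T γ))
      (nhdsWithin 0 (Set.Ioo (0:ℝ) (1/2))) (nhds Λ) := by
    have hden : Tendsto (fun γ => 1 - d γ * T γ)
        (nhdsWithin 0 (Set.Ioo (0:ℝ) (1/2))) (nhds 1) := by
      have := (tendsto_const_nhds (x := (1:ℝ))).sub (hdT.mul hTt)
      simpa using this
    have := hTt.div hden (by norm_num)
    rw [div_one] at this
    exact this
  have hfinal : Tendsto (fun γ => expit (Real.log (T γ / (1 - d γ * T γ))))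
      (nhdsWithin 0 (Set.Ioo (0:ℝ) (1/2))) (nhds (expit (Real.log Λ))) :=
    (expit_continuous.continuousAt.tendsto.comp
      ((Real.continuousAt_log hΛpos.ne').tendsto)).comp hgt
  -- eventual equality
  have hev : ∀ᶠ γ in nhdsWithin 0 (Set.Ioo (0:ℝ) (1/2)),
      expit (Real.log (T γ / (1 - d γ * T γ)))
      = expit (logit (n⁻¹ * ∑ i ∈ I0, expit (logit (M i) + Real.log (γ / (1 - γ)))) -
        Real.log (γ / (1 - γ))) := by
    filter_upwards [self_mem_nhdsWithin] with γ hγ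
    obtain ⟨hγ0, hγ1⟩ := hγ
    have h1γ : 0 < 1 - γ := by linarith
    have hdpos : 0 < d γ := div_pos hγ0 h1γ
    have hTpos : 0 < T γ := by
      apply mul_pos (inv_pos.mpr hn)
      apply Finset.sum_pos _ h0
      intro i hi
      exact div_pos (hrpos i hi) (by nlinarith [hrpos i hi])
    have hsum : ∑ i ∈ I0, expit (logit (M i) + Real.log (γ / (1 - γ)))
        = d γ * ∑ i ∈ I0, r i / (1 + d γ * r i) := by
      rw [Finset.mul_sum]
      apply Finset.sum_congr rfl
      intro i hi
      have hri := hrpos i hi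
      have hlog : logit (M i) + Real.log (γ / (1 - γ)) = Real.log (r i * d γ) := by
        rw [Real.log_mul hri.ne' hdpos.ne']
        rfl
      rw [hlog, expit_log _ (mul_pos hri hdpos)]
      have hden : (0:ℝ) < 1 + d γ * r i := by nlinarith
      field_simp
    have hST : n⁻¹ * ∑ i ∈ I0, expit (logit (M i) + Real.log (γ / (1 - γ)))
        = d γ * T γ := by
      rw [hsum, hTdef]; ring
    have hlt1 : d γ * T γ < 1 := by
      have hsum_lt : ∑ i ∈ I0, d γ * (r i / (1 + d γ * r i)) < ∑ i ∈ I0, (1:ℝ) := by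
        apply Finset.sum_lt_sum_of_nonempty h0
        intro i hi
        have hri := hrpos i hi
        have hden : (0:ℝ) < 1 + d γ * r i := by nlinarith
        have heq : d γ * (r i / (1 + d γ * r i)) = d γ * r i / (1 + d γ * r i) := by
          ring
        rw [heq, div_lt_one hden]
        linarith
      have : d γ * T γ = n⁻¹ * ∑ i ∈ I0, d γ * (r i / (1 + d γ * r i)) := by
        simp only [hTdef]
        rw [← Finset.mul_sum]; ring
      rw [this]
      have hle : n⁻¹ * ∑ i ∈ I0, d γ * (r i / (1 + d γ * r i)) < n⁻¹ * n := by
        apply (mul_lt_mul_iff_right₀ (inv_pos.mpr hn)).mpr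
        simpa using hsum_lt
      rw [inv_mul_cancel₀ hn.ne'] at hle
      exact hle
    have hSpos : 0 < d γ * T γ := mul_pos hdpos hTpos
    have h1S : 0 < 1 - d γ * T γ := by linarith
    rw [hST]
    congr 1
    show Real.log (T γ / (1 - d γ * T γ))
        = Real.log (d γ * T γ / (1 - d γ * T γ)) - Real.log (d γ)
    rw [Real.log_div hSpos.ne' h1S.ne', Real.log_mul hdpos.ne' hTpos.ne',
      Real.log_div hTpos.ne' h1S.ne']
    ring
  exact hfinal.congr' hev
end
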